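/- Fix a real α with 0 < α < 1 and a real τ > 0. With I_d(t) = ∫_1^d k^{−α}(1 − k^{−α})^t dk and H_{d,α} = Σ_{k=1}^d k^{−α}, one has lim_{d→∞} I_d(τ·d^α) / H_{d,α} = ((1−α)/α) · τ^{(1/α)−1} · ∫_τ^∞ z^{−1/α} e^{−z} dz. -/

import Mathlib

/-!
Substituting `z = t k^{-α}` turns `I_d(t)` into
`(1/α) t^{1/α-1} ∫_{t d^{-α}}^t z^{-1/α} (1 - z/t)^t dz`. At `t = τ d^α` the lower limit is `τ`
and the prefactor is `τ^{1/α-1} d^{1-α} / α`; the remaining integral tends to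
`∫_τ^∞ z^{-1/α} e^{-z} dz` by dominated convergence, because `(1 - z/t)^t → e^{-z}` and
`(1 - z/t)^t ≤ e^{-z}`. Comparing the sum with an integral gives `H_{d,α} ~ d^{1-α} / (1-α)`,
and the factor `d^{1-α}` cancels.
-/

open Filter MeasureTheory Set Real Topology

theorem integral_rpow_neg_mul_comp_eq {α t a b : ℝ} (hα : α ≠ 0) (ht : 0 < t) (ha : 0 < a)
    (hb : 0 < b) {g : ℝ → ℝ} (hg : Continuous g) :
    ∫ k in a..b, k ^ (-α) * g (k ^ (-α)) =
      (1 / α) * t ^ (1 / α - 1) *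
        ∫ z in t * b ^ (-α)..t * a ^ (-α), z ^ (-(1 / α)) * g (z / t) := by
  have hpos : uIcc b a ⊆ Ioi 0 := fun k hk => lt_of_lt_of_le (lt_min hb ha) hk.1
  have himage : (fun k => t * k ^ (-α)) '' uIcc b a ⊆ Ioi 0 := by
    rintro _ ⟨k, hk, rfl⟩
    exact mul_pos ht (rpow_pos_of_pos (hpos hk) _)
  have hsubst := intervalIntegral.integral_comp_mul_deriv'
    (f := fun k => t * k ^ (-α)) (f' := fun k => t * (-α * k ^ (-α - 1)))
    (g := fun z => z ^ (-(1 / α)) * g (z / t))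
    (fun k hk => (hasDerivAt_rpow_const (Or.inl (hpos hk).ne')).const_mul t)
    (continuousOn_const.mul (continuousOn_const.mul
      (continuousOn_id.rpow_const fun k hk => Or.inl (hpos hk).ne')))
    ((continuousOn_id.rpow_const fun z hz => Or.inl (himage hz).ne').mul
      (hg.comp_continuousOn (continuousOn_id.div_const t)))
  rw [← hsubst, intervalIntegral.integral_symm, ← intervalIntegral.integral_neg,
    ← intervalIntegral.integral_const_mul]
  refine intervalIntegral.integral_congr fun k hk => ?_
  have hk0 : 0 < k := hpos (uIcc_comm a b ▸ hk)
  have hpow : (t * k ^ (-α)) ^ (-(1 / α)) = t ^ (-(1 / α)) * k := by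
    rw [mul_rpow ht.le (rpow_nonneg hk0.le _), ← rpow_mul hk0.le, neg_mul_neg,
      mul_one_div_cancel hα, rpow_one]
  have hk1 : k * k ^ (-α - 1) = k ^ (-α) := by
    rw [rpow_sub_one hk0.ne', mul_div_cancel₀ _ hk0.ne']
  simp only [Function.comp_apply, hpow, mul_div_cancel_left₀ _ ht.ne']
  rw [rpow_sub_one ht.ne', rpow_neg ht.le, ← hk1]
  field_simp

theorem one_sub_div_rpow_le_exp_neg {x t : ℝ} (ht : 0 < t) (hx : x ≤ t) :
    (1 - x / t) ^ t ≤ exp (-x) := calc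
  (1 - x / t) ^ t ≤ exp (-(x / t)) ^ t :=
    rpow_le_rpow (by rw [sub_nonneg, div_le_one ht]; exact hx)
      (by linarith [add_one_le_exp (-(x / t))]) ht.le
  _ = exp (-x) := by rw [← exp_mul, neg_mul, div_mul_cancel₀ x ht.ne']

theorem tendsto_one_sub_div_rpow_self (x : ℝ) :
    Tendsto (fun t : ℝ => (1 - x / t) ^ t) atTop (𝓝 (exp (-x))) := by
  simpa only [neg_div, ← sub_eq_add_neg] using tendsto_one_add_div_rpow_exp (-x)

theorem tendsto_integral_mul_one_sub_div_rpow {f : ℝ → ℝ} {τ : ℝ}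
    (hf : IntegrableOn (fun z => f z * exp (-z)) (Ioi τ)) :
    Tendsto (fun t => ∫ z in τ..t, f z * (1 - z / t) ^ t) atTop
      (𝓝 (∫ z in Ioi τ, f z * exp (-z))) := by
  let F t := (Ioc τ t).indicator fun z => f z * (1 - z / t) ^ t
  have hf_meas : AEStronglyMeasurable f (volume.restrict (Ioi τ)) := by
    refine (hf.aestronglyMeasurable.mul continuous_exp.aestronglyMeasurable).congr
      (ae_of_all _ fun z => ?_)
    simp [mul_assoc, ← exp_add]
  have hF_meas : ∀ t, AEStronglyMeasurable (F t) (volume.restrict (Ioi τ)) := fun t =>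
    (hf_meas.mul (by fun_prop : Measurable fun z : ℝ => (1 - z / t) ^ t).aestronglyMeasurable)
      |>.indicator measurableSet_Ioc
  have hF_le : ∀ t, 0 < t → ∀ z, ‖F t z‖ ≤ ‖f z * exp (-z)‖ := fun t ht z => by
    by_cases hz : z ∈ Ioc τ t
    · have hbase : 0 ≤ 1 - z / t := by rw [sub_nonneg, div_le_one ht]; exact hz.2
      simp only [F, indicator_of_mem hz, norm_mul, norm_of_nonneg (rpow_nonneg hbase _),
        norm_of_nonneg (exp_pos _).le]
      gcongr
      exact one_sub_div_rpow_le_exp_neg ht hz.2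
    · simp only [F, indicator_of_notMem hz, norm_zero]
      positivity
  have hF_lim : ∀ z ∈ Ioi τ, Tendsto (F · z) atTop (𝓝 (f z * exp (-z))) := fun z hz =>
    ((tendsto_one_sub_div_rpow_self z).const_mul (f z)).congr' <| by
      filter_upwards [eventually_ge_atTop z] with t hzt
      simp [F, indicator_of_mem (show z ∈ Ioc τ t from ⟨hz, hzt⟩)]
  refine (tendsto_integral_filter_of_dominated_convergence _ (Eventually.of_forall hF_meas)
    ?_ hf.norm ((ae_restrict_iff' measurableSet_Ioi).mpr (ae_of_all _ hF_lim))).congr' ?_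
  · filter_upwards [eventually_gt_atTop 0] with t ht
    exact ae_of_all _ (hF_le t ht)
  · filter_upwards [eventually_ge_atTop τ] with t hτt
    rw [integral_indicator measurableSet_Ioc, Measure.restrict_restrict measurableSet_Ioc,
      inter_eq_self_of_subset_left Ioc_subset_Ioi_self, intervalIntegral.integral_of_le hτt]

theorem integrableOn_rpow_mul_exp_neg_Ioi {p τ : ℝ} (hτ : 0 < τ) (hp : p ≤ 0) :
    IntegrableOn (fun z => z ^ p * exp (-z)) (Ioi τ) := by
  refine ((integrableOn_exp_neg_Ioi τ).const_mul (τ ^ p)).mono' ?_ ?_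
  · exact (by fun_prop : Measurable fun z : ℝ => z ^ p * exp (-z)).aestronglyMeasurable
  · refine (ae_restrict_iff' measurableSet_Ioi).mpr (ae_of_all _ fun z hz => ?_)
    have hz0 : 0 < z := hτ.trans hz
    rw [norm_mul, norm_of_nonneg (rpow_nonneg hz0.le _), norm_of_nonneg (exp_pos _).le]
    exact mul_le_mul_of_nonneg_right (rpow_le_rpow_of_nonpos hτ hz.le hp) (exp_pos _).le

theorem tendsto_integral_rpow_neg_div_rpow {α : ℝ} (hα : α < 1) :
    Tendsto (fun x : ℝ => (∫ y in (1 : ℝ)..x, y ^ (-α)) / x ^ (1 - α)) atTop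
      (𝓝 (1 / (1 - α))) := by
  have hpos : 0 < 1 - α := sub_pos.mpr hα
  have hinv : Tendsto (fun x : ℝ => (x ^ (1 - α))⁻¹) atTop (𝓝 0) :=
    (tendsto_rpow_atTop hpos).inv_tendsto_atTop
  have hlim := (hinv.const_sub 1).div_const (1 - α)
  rw [sub_zero] at hlim
  refine hlim.congr' ?_
  filter_upwards [eventually_gt_atTop 0] with x hx
  rw [integral_rpow (Or.inl (by linarith)), one_rpow, show -α + 1 = 1 - α by ring]
  field_simp [(rpow_pos_of_pos hx (1 - α)).ne']

theorem antitoneOn_rpow_neg_Ici_one {α : ℝ} (hα : 0 ≤ α) :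
    AntitoneOn (fun x : ℝ => x ^ (-α)) (Ici 1) := fun _ hx _ _ hxy =>
  rpow_le_rpow_of_nonpos (zero_lt_one.trans_le hx) hxy (neg_nonpos.mpr hα)

theorem integral_rpow_neg_le_sum_Icc {α : ℝ} (hα : 0 ≤ α) {d : ℕ} (hd : 1 ≤ d) :
    ∫ x in (1 : ℝ)..d, x ^ (-α) ≤ ∑ k ∈ Finset.Icc 1 d, (k : ℝ) ^ (-α) := by
  have h := ((antitoneOn_rpow_neg_Ici_one hα).mono fun _ hx => by
    simpa using hx.1).integral_le_sum_Ico hd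
  rw [Nat.cast_one] at h
  refine h.trans (Finset.sum_le_sum_of_subset_of_nonneg Finset.Ico_subset_Icc_self
    fun k _ _ => rpow_nonneg k.cast_nonneg _)

theorem sum_Icc_rpow_neg_le {α : ℝ} (hα : 0 ≤ α) {d : ℕ} (hd : 1 ≤ d) :
    ∑ k ∈ Finset.Icc 1 d, (k : ℝ) ^ (-α) ≤ (∫ x in (1 : ℝ)..d, x ^ (-α)) + 1 := by
  have h := ((antitoneOn_rpow_neg_Ici_one hα).mono fun _ hx => by
    simpa using hx.1).sum_le_integral_Ico hd
  rw [Nat.cast_one] at h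
  rw [← Finset.Ico_add_one_right_eq_Icc, Finset.sum_eq_sum_Ico_succ_bot (by omega),
    ← Finset.sum_Ico_add', Nat.cast_one, one_rpow]
  linarith

theorem tendsto_sum_Icc_rpow_neg_div_rpow {α : ℝ} (hα0 : 0 ≤ α) (hα1 : α < 1) :
    Tendsto (fun d : ℕ => (∑ k ∈ Finset.Icc 1 d, (k : ℝ) ^ (-α)) / (d : ℝ) ^ (1 - α)) atTop
      (𝓝 (1 / (1 - α))) := by
  have hI := (tendsto_integral_rpow_neg_div_rpow hα1).comp tendsto_natCast_atTop_atTop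
  have hinv : Tendsto (fun d : ℕ => ((d : ℝ) ^ (1 - α))⁻¹) atTop (𝓝 0) :=
    ((tendsto_rpow_atTop (sub_pos.mpr hα1)).comp tendsto_natCast_atTop_atTop)
      |>.inv_tendsto_atTop
  have hI' := hI.add hinv
  rw [add_zero] at hI'
  refine tendsto_of_tendsto_of_tendsto_of_le_of_le' hI hI' ?_ ?_ <;>
    filter_upwards [eventually_ge_atTop 1] with d hd <;>
    have hd' : 0 < (d : ℝ) ^ (1 - α) := rpow_pos_of_pos (by exact_mod_cast hd) _
  · exact div_le_div_of_nonneg_right (integral_rpow_neg_le_sum_Icc hα0 hd) hd'.le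
  · rw [Function.comp_apply, ← one_div, ← add_div]
    exact div_le_div_of_nonneg_right (sum_Icc_rpow_neg_le hα0 hd) hd'.le

theorem integral_rpow_neg_mul_one_sub_rpow_neg_eq {α τ d : ℝ} (hα : α ≠ 0) (hτ : 0 < τ)
    (hd : 0 < d) :
    ∫ k in (1 : ℝ)..d, k ^ (-α) * (1 - k ^ (-α)) ^ (τ * d ^ α) =
      (1 / α) * τ ^ (1 / α - 1) * d ^ (1 - α) *
        ∫ z in τ..τ * d ^ α, z ^ (-(1 / α)) * (1 - z / (τ * d ^ α)) ^ (τ * d ^ α) := by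
  have ht : 0 < τ * d ^ α := mul_pos hτ (rpow_pos_of_pos hd α)
  have hsubst := integral_rpow_neg_mul_comp_eq hα ht one_pos hd
    (g := fun x => (1 - x) ^ (τ * d ^ α)) (by fun_prop (disch := exact ht.le))
  have hτ' : τ * d ^ α * d ^ (-α) = τ := by
    rw [mul_assoc, ← rpow_add hd, add_neg_cancel, rpow_zero, mul_one]
  have hpow : (τ * d ^ α) ^ (1 / α - 1) = τ ^ (1 / α - 1) * d ^ (1 - α) := by
    rw [mul_rpow hτ.le (rpow_nonneg hd.le _), ← rpow_mul hd.le, mul_sub, mul_one_div_cancel hα,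
      mul_one]
  rw [hsubst, hτ', one_rpow, mul_one, hpow]
  ring

theorem stmt4 (α τ : ℝ) (hα0 : 0 < α) (hα1 : α < 1) (hτ : 0 < τ) :
    Tendsto
      (fun d : ℕ =>
        (∫ k in (1 : ℝ)..(d : ℝ), k ^ (-α) * (1 - k ^ (-α)) ^ (τ * (d : ℝ) ^ α)) /
        (∑ k ∈ Finset.Icc 1 d, (k : ℝ) ^ (-α)))
      atTop
      (nhds (((1 - α) / α) * τ ^ (1 / α - 1) *
        ∫ z in Set.Ioi τ, z ^ (-(1 / α)) * Real.exp (-z))) := by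
  have ht : Tendsto (fun d : ℕ => τ * (d : ℝ) ^ α) atTop atTop :=
    ((tendsto_rpow_atTop hα0).comp tendsto_natCast_atTop_atTop).const_mul_atTop hτ
  have hJ := (tendsto_integral_mul_one_sub_div_rpow
    (integrableOn_rpow_mul_exp_neg_Ioi hτ (p := -(1 / α)) (by simp [hα0.le]))).comp ht
  have hH : Tendsto (fun d : ℕ => (d : ℝ) ^ (1 - α) / ∑ k ∈ Finset.Icc 1 d, (k : ℝ) ^ (-α))
      atTop (𝓝 (1 - α)) := by
    simpa using (tendsto_sum_Icc_rpow_neg_div_rpow hα0.le hα1).inv₀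
      (by simp [sub_eq_zero, hα1.ne'])
  convert ((hJ.const_mul ((1 / α) * τ ^ (1 / α - 1))).mul hH).congr' ?_ using 2
  · ring
  filter_upwards [eventually_ge_atTop 1] with d hd
  rw [integral_rpow_neg_mul_one_sub_rpow_neg_eq hα0.ne' hτ (by exact_mod_cast hd)]
  simp only [Function.comp_apply]
  ring
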